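/- Let (X,Σ) be a standard Borel space, T a standard Borel space, and 𝒜 ⊆ Σ a countable algebra generating Σ. Let t ↦ μ_t and t ↦ ν_t be families of finite measures on (X,Σ) such that t ↦ μ_t(A) and t ↦ ν_t(A) are Borel for every A ∈ 𝒜, and such that ν_t ≪ μ_t for every t ∈ T. Then there exists a Borel function h : T×X → [0,∞) such that for every t ∈ T, the function h(t,·) is a version of the Radon–Nikodym derivative dν_t/dμ_t, μ_t-almost everywhere on X. -/

import Mathlib

/-!
The families `μ`, `ν` are measurable as maps into `Measure X`: for finite measures, the sets `s`
with `t ↦ μ t s` measurable form a Dynkin system, and it contains the π-system `𝒜`. Since `𝒜` is countable, `X` is countably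
generated, so Mathlib's Radon–Nikodym derivative of kernels gives a jointly measurable density.
That construction needs uniformly bounded kernels, which we obtain by dividing both families by
`1 + μ t univ + ν t univ`; this positive finite factor does not change `dν_t/dμ_t`.
-/

open MeasureTheory ProbabilityTheory Set
open scoped ENNReal NNReal

section

variable {T X : Type*} [MeasurableSpace T] [MeasurableSpace X]

lemma MeasureTheory.Measure.rnDeriv_smul_same_of_ne_top (ν μ : Measure X) [IsFiniteMeasure ν]
    [IsFiniteMeasure μ] {r : ℝ≥0∞} (hr₀ : r ≠ 0) (hr : r ≠ ∞) :
    (r • ν).rnDeriv (r • μ) =ᵐ[μ] ν.rnDeriv μ := by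
  lift r to ℝ≥0 using hr
  exact Measure.rnDeriv_smul_same ν μ (by exact_mod_cast hr₀)

lemma Measurable.smul_measure_family {w : T → ℝ≥0∞} {μ : T → Measure X} (hw : Measurable w)
    (hμ : Measurable μ) : Measurable fun t ↦ w t • μ t := by
  refine Measure.measurable_of_measurable_coe _ fun s hs ↦ ?_
  simp only [Measure.smul_apply, smul_eq_mul]
  exact hw.mul (Measure.measurable_coe hs |>.comp hμ)

namespace ProbabilityTheory.Kernel

noncomputable def rescale (w : T → ℝ≥0∞) (hw : Measurable w) (μ : T → Measure X)
    (hμ : Measurable μ) : Kernel T X :=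
  ⟨fun t ↦ w t • μ t, hw.smul_measure_family hμ⟩

lemma rescale_apply {w : T → ℝ≥0∞} (hw : Measurable w) {μ : T → Measure X} (hμ : Measurable μ)
    (t : T) : rescale w hw μ hμ t = w t • μ t :=
  rfl

lemma isFiniteKernel_rescale {w : T → ℝ≥0∞} (hw : Measurable w) {μ : T → Measure X}
    (hμ : Measurable μ) (hbound : ∀ t, w t * μ t univ ≤ 1) :
    IsFiniteKernel (rescale w hw μ hμ) :=
  ⟨⟨1, ENNReal.one_lt_top, fun t ↦ by simpa [rescale_apply] using hbound t⟩⟩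

end ProbabilityTheory.Kernel

theorem exists_measurable_uncurry_eventuallyEq_rnDeriv
    [MeasurableSpace.CountableOrCountablyGenerated T X] {μ ν : T → Measure X}
    [∀ t, IsFiniteMeasure (μ t)] [∀ t, IsFiniteMeasure (ν t)]
    (hμ : Measurable μ) (hν : Measurable ν) :
    ∃ f : T → X → ℝ≥0∞, Measurable (Function.uncurry f) ∧
      ∀ t, f t =ᵐ[μ t] (ν t).rnDeriv (μ t) := by
  set w : T → ℝ≥0∞ := fun t ↦ (1 + μ t univ + ν t univ)⁻¹
  have hw : Measurable w :=
    ((measurable_const.add (Measure.measurable_coe .univ |>.comp hμ)).add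
      (Measure.measurable_coe .univ |>.comp hν)).inv
  have hw₀ (t : T) : w t ≠ 0 := by simp [w, measure_ne_top]
  have hw_top (t : T) : w t ≠ ∞ := by simp [w]
  let η := Kernel.rescale w hw μ hμ
  let κ := Kernel.rescale w hw ν hν
  have : IsFiniteKernel η := Kernel.isFiniteKernel_rescale hw hμ fun t ↦
    (mul_le_mul_right (le_add_self.trans le_self_add) _).trans (ENNReal.inv_mul_le_one _)
  have : IsFiniteKernel κ := Kernel.isFiniteKernel_rescale hw hν fun t ↦
    (mul_le_mul_right le_add_self _).trans (ENNReal.inv_mul_le_one _)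
  refine ⟨Kernel.rnDeriv κ η, Kernel.measurable_rnDeriv κ η, fun t ↦ ?_⟩
  have hae : ae (η t) = ae (μ t) := Measure.ae_ennreal_smul_measure_eq (hw₀ t) _
  calc Kernel.rnDeriv κ η t
      =ᵐ[μ t] (κ t).rnDeriv (η t) := hae ▸ Kernel.rnDeriv_eq_rnDeriv_measure
    _ =ᵐ[μ t] (ν t).rnDeriv (μ t) :=
      Measure.rnDeriv_smul_same_of_ne_top (ν t) (μ t) (hw₀ t) (hw_top t)

end

theorem exists_jointly_measurable_rnDeriv
    {X : Type*} [MeasurableSpace X]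
    {T : Type*} [MeasurableSpace T]
    (𝒜 : Set (Set X)) (hcount : 𝒜.Countable) (halg : MeasureTheory.IsSetAlgebra 𝒜)
    (hgen : MeasurableSpace.generateFrom 𝒜 = (inferInstance : MeasurableSpace X))
    (μ ν : T → Measure X)
    (hμfin : ∀ t, IsFiniteMeasure (μ t)) (hνfin : ∀ t, IsFiniteMeasure (ν t))
    (hμmeas : ∀ A ∈ 𝒜, Measurable fun t => μ t A)
    (hνmeas : ∀ A ∈ 𝒜, Measurable fun t => ν t A) :
    ∃ h : T → X → ℝ≥0, Measurable (Function.uncurry h) ∧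
      ∀ t, (fun x => (h t x : ℝ≥0∞)) =ᵐ[μ t] (ν t).rnDeriv (μ t) := by
  have : MeasurableSpace.CountablyGenerated X := ⟨⟨𝒜, hcount, hgen.symm⟩⟩
  have hpi : IsPiSystem 𝒜 := fun s hs u hu _ ↦ halg.inter_mem hs hu
  have hμ : Measurable μ := .measure_of_isPiSystem hgen.symm hpi hμmeas (hμmeas _ halg.univ_mem)
  have hν : Measurable ν := .measure_of_isPiSystem hgen.symm hpi hνmeas (hνmeas _ halg.univ_mem)
  obtain ⟨f, hf, hf_rnDeriv⟩ := exists_measurable_uncurry_eventuallyEq_rnDeriv hμ hν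
  refine ⟨fun t x ↦ (f t x).toNNReal, hf.ennreal_toNNReal, fun t ↦ ?_⟩
  filter_upwards [hf_rnDeriv t, Measure.rnDeriv_lt_top (ν t) (μ t)] with x hx hx_lt
  simp [hx, hx_lt.ne]
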